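/- arXiv:1509.07445 — 7 statements merged into one kernel-verified Lean document; each statement's English description precedes it below -/
import Mathlib

section
/- Let X be a finite set of keys, let f, g : X → ℝ≥0 satisfy sum(f) > 0 and sum(g) > 0, and suppose there are constants 0 < a ≤ b with a·g_x ≤ f_x ≤ b·g_x for every x ∈ X; set ρ = b/a. Fix k > 0 and let S be a random sample that includes each key x independently with probability p_x = min{1, k·f_x/sum(f)}. Then for every segment H ⊆ X with sum(g;H) > 0, the inverse-probability estimator Ŝ(g;H) = Σ_{x∈S∩H} g_x/p_x satisfies E[Ŝ(g;H)] = sum(g;H) and Var[Ŝ(g;H)] ≤ ρ·sum(g;H)·sum(g)/k; equivalently its coefficient of variation is at most sqrt(ρ/(q^{(g)}(H)·k)). -/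
open Finset

/-!
The estimator is a sum over the sample of `g x / p x` for `x ∈ H`. Keys enter a Poisson
sample independently, so each summand has mean `g x` and the variance is the sum of the
per-key variances `g x ^ 2 * (1 - p x) / p x`. Keys with `p x = 1` contribute nothing, and
otherwise `p x = k f x / sum f ≥ k a g x / (b sum g)`, which bounds the term by
`(b / a) * g x * sum g / k`; summing over `H` gives the claim.
-/

/-- Probability that a Poisson sample with independent inclusion probabilities `p`
equals exactly the subset `S`. -/
noncomputable def sampleProb {X : Type*} [Fintype X] [DecidableEq X]
    (p : X → ℝ) (S : Finset X) : ℝ :=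
  (∏ x ∈ S, p x) * ∏ x ∈ Sᶜ, (1 - p x)

/-- Expectation of a functional of the sample. -/
noncomputable def pexpect {X : Type*} [Fintype X] [DecidableEq X]
    (p : X → ℝ) (φ : Finset X → ℝ) : ℝ :=
  ∑ S : Finset X, sampleProb p S * φ S

/-- Variance of a functional of the sample. -/
noncomputable def pvar {X : Type*} [Fintype X] [DecidableEq X]
    (p : X → ℝ) (φ : Finset X → ℝ) : ℝ :=
  pexpect p (fun S => (φ S - pexpect p φ) ^ 2)

section PoissonSampling

variable {X : Type*} [Fintype X] [DecidableEq X]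

theorem pexpect_add (p : X → ℝ) (φ ψ : Finset X → ℝ) :
    pexpect p (fun S => φ S + ψ S) = pexpect p φ + pexpect p ψ := by
  simp only [pexpect, mul_add, sum_add_distrib]

theorem pexpect_sum {ι : Type*} (p : X → ℝ) (I : Finset ι) (φ : ι → Finset X → ℝ) :
    pexpect p (fun S => ∑ i ∈ I, φ i S) = ∑ i ∈ I, pexpect p (φ i) := by
  simp only [pexpect, mul_sum]
  exact sum_comm

theorem pexpect_const_mul (p : X → ℝ) (c : ℝ) (φ : Finset X → ℝ) :
    pexpect p (fun S => c * φ S) = c * pexpect p φ := by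
  simp only [pexpect, mul_sum, mul_left_comm]

theorem sum_sampleProb (p : X → ℝ) : ∑ S, sampleProb p S = 1 := by
  simp [sampleProb, ← Fintype.prod_add]

theorem pexpect_const (p : X → ℝ) (c : ℝ) : pexpect p (fun _ => c) = c := by
  rw [pexpect, ← sum_mul, sum_sampleProb, one_mul]

theorem pexpect_subset (p : X → ℝ) (T : Finset X) :
    pexpect p (fun S => if T ⊆ S then 1 else 0) = ∏ x ∈ T, p x := by
  -- Killing the factor `1 - p x` for `x ∈ T` removes exactly the samples missing a key of `T`.
  have hterm : ∀ S : Finset X, sampleProb p S * (if T ⊆ S then 1 else 0)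
      = (∏ x ∈ S, p x) * ∏ x ∈ Sᶜ, (if x ∈ T then 0 else 1 - p x) := by
    intro S
    by_cases hTS : T ⊆ S
    · rw [if_pos hTS, mul_one, sampleProb]
      refine congrArg _ (prod_congr rfl fun x hx => ?_)
      rw [if_neg fun hxT => mem_compl.mp hx (hTS hxT)]
    · obtain ⟨t, htT, htS⟩ := not_subset.mp hTS
      have hmiss : ∏ x ∈ Sᶜ, (if x ∈ T then 0 else 1 - p x) = 0 :=
        prod_eq_zero (mem_compl.mpr htS) (if_pos htT)
      rw [if_neg hTS, mul_zero, hmiss, mul_zero]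
  simp only [pexpect, hterm, ← Fintype.prod_add]
  rw [← Fintype.prod_ite_mem T p]
  refine prod_congr rfl fun x _ => ?_
  split_ifs <;> ring

theorem pexpect_ite_mem (p : X → ℝ) (x : X) (c : ℝ) :
    pexpect p (fun S => if x ∈ S then c else 0) = c * p x := by
  rw [← prod_singleton p x, ← pexpect_subset, ← pexpect_const_mul]
  congr 1
  ext S
  simp [singleton_subset_iff]

theorem pexpect_ite_mem_mul_ite_mem (p : X → ℝ) (x y : X) (c d : ℝ) :
    pexpect p (fun S => (if x ∈ S then c else 0) * (if y ∈ S then d else 0))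
      = c * d * ∏ z ∈ {x, y}, p z := by
  rw [← pexpect_subset, ← pexpect_const_mul]
  congr 1
  ext S
  by_cases hx : x ∈ S <;> by_cases hy : y ∈ S <;> simp [hx, hy, insert_subset_iff]

theorem pvar_eq_pexpect_sq_sub_sq (p : X → ℝ) (φ : Finset X → ℝ) :
    pvar p φ = pexpect p (fun S => φ S ^ 2) - pexpect p φ ^ 2 := by
  have hexpand : ∀ S, (φ S - pexpect p φ) ^ 2
      = φ S ^ 2 + (-2 * pexpect p φ) * φ S + pexpect p φ ^ 2 := fun S => by ring
  simp only [pvar, hexpand, pexpect_add, pexpect_const_mul, pexpect_const]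
  ring

theorem pexpect_sum_inter (p : X → ℝ) (H : Finset X) (c : X → ℝ) :
    pexpect p (fun S => ∑ x ∈ S ∩ H, c x) = ∑ x ∈ H, c x * p x := by
  simp only [inter_comm _ H, ← sum_ite_mem, pexpect_sum, pexpect_ite_mem]

theorem pvar_sum_inter (p : X → ℝ) (H : Finset X) (c : X → ℝ) :
    pvar p (fun S => ∑ x ∈ S ∩ H, c x) = ∑ x ∈ H, c x ^ 2 * (p x * (1 - p x)) := by
  have hsq : pexpect p (fun S => (∑ x ∈ S ∩ H, c x) ^ 2)
      = ∑ x ∈ H, ∑ y ∈ H, c x * c y * ∏ z ∈ {x, y}, p z := by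
    simp only [inter_comm _ H, ← sum_ite_mem, sq, sum_mul_sum, pexpect_sum,
      pexpect_ite_mem_mul_ite_mem]
  rw [pvar_eq_pexpect_sq_sub_sq, hsq, pexpect_sum_inter, sq, sum_mul_sum, ← sum_sub_distrib]
  refine sum_congr rfl fun x hx => ?_
  -- Off the diagonal `∏ z ∈ {x, y}, p z = p x * p y`: distinct keys are sampled independently.
  rw [← sum_sub_distrib, sum_eq_single_of_mem x hx fun y _ hyx => ?_]
  · rw [pair_eq_singleton, prod_singleton]
    ring
  · rw [prod_pair hyx.symm]
    ring

theorem pexpect_sum_inter_div (p : X → ℝ) (H : Finset X) (w : X → ℝ)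
    (hw : ∀ x ∈ H, p x = 0 → w x = 0) :
    pexpect p (fun S => ∑ x ∈ S ∩ H, w x / p x) = ∑ x ∈ H, w x := by
  rw [pexpect_sum_inter]
  exact sum_congr rfl fun x hx => div_mul_cancel_of_imp (hw x hx)

end PoissonSampling

/-- Capping an inclusion probability at `1` can only lower the variance term of a key
(`c / 0 = 0` makes the case `q = 0` hold too). -/
theorem sq_div_min_one_mul_le {c q : ℝ} (hq : 0 ≤ q) :
    (c / min 1 q) ^ 2 * (min 1 q * (1 - min 1 q)) ≤ c ^ 2 / q := by
  rcases le_total 1 q with h1q | hq1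
  · rw [min_eq_left h1q, sub_self, mul_zero, mul_zero]
    positivity
  rw [min_eq_right hq1]
  rcases hq.eq_or_lt with rfl | hq0
  · simp
  rw [div_pow, ← mul_assoc, sq q, div_mul_eq_mul_div, mul_div_mul_right _ _ hq0.ne']
  exact mul_le_of_le_one_right (by positivity) (by linarith)

section ppsSampling

variable {X : Type*} [Fintype X]

noncomputable def ppsProb (k : ℝ) (f : X → ℝ) (x : X) : ℝ :=
  min 1 (k * f x / ∑ y, f y)

theorem ppsProb_pos {k : ℝ} {f : X → ℝ} (hk : 0 < k) (hf0 : ∀ x, 0 ≤ f x) {x : X}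
    (hx : 0 < f x) : 0 < ppsProb k f x :=
  have hsum : 0 < ∑ y, f y := hx.trans_le (single_le_sum (fun y _ => hf0 y) (mem_univ x))
  lt_min one_pos (div_pos (mul_pos hk hx) hsum)

theorem sq_div_ppsProb_mul_le {a b k : ℝ} {f g : X → ℝ} (ha : 0 < a) (hk : 0 < k)
    (hg0 : ∀ x, 0 ≤ g x) (hlow : ∀ x, a * g x ≤ f x) (hhigh : ∀ x, f x ≤ b * g x) (x : X) :
    (g x / ppsProb k f x) ^ 2 * (ppsProb k f x * (1 - ppsProb k f x))
      ≤ b / a * g x * (∑ y, g y) / k := by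
  have hf0 : ∀ y, 0 ≤ f y := fun y => (mul_nonneg ha.le (hg0 y)).trans (hlow y)
  refine (sq_div_min_one_mul_le
    (div_nonneg (mul_nonneg hk.le (hf0 x)) (sum_nonneg fun y _ => hf0 y))).trans ?_
  rcases (hg0 x).eq_or_lt with hgx | hgx
  · simp [← hgx]
  have hfx : 0 < f x := (mul_pos ha hgx).trans_le (hlow x)
  have hb : 0 < b := pos_of_mul_pos_left (hfx.trans_le (hhigh x)) (hg0 x)
  have hsum : ∑ y, f y ≤ b * ∑ y, g y := by
    rw [mul_sum]
    exact sum_le_sum fun y _ => hhigh y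
  have hG : 0 ≤ ∑ y, g y := sum_nonneg fun y _ => hg0 y
  rw [div_div_eq_mul_div, div_le_div_iff₀ (by positivity) hk]
  calc g x ^ 2 * (∑ y, f y) * k ≤ g x ^ 2 * (b * ∑ y, g y) * k := by gcongr
    _ = b / a * g x * (∑ y, g y) * (k * (a * g x)) := by field_simp
    _ ≤ b / a * g x * (∑ y, g y) * (k * f x) := by gcongr; exact hlow x

end ppsSampling

theorem stmt0_general {X : Type*} [Fintype X] [DecidableEq X]
    (f g : X → ℝ) (hg0 : ∀ x, 0 ≤ g x)
    (a b : ℝ) (ha : 0 < a)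
    (hlow : ∀ x, a * g x ≤ f x) (hhigh : ∀ x, f x ≤ b * g x)
    (k : ℝ) (hk : 0 < k)
    (p : X → ℝ) (hp : ∀ x, p x = min 1 (k * f x / ∑ y, f y))
    (H : Finset X)
    (est : Finset X → ℝ) (hest : ∀ S, est S = ∑ x ∈ S ∩ H, g x / p x) :
    pexpect p est = ∑ x ∈ H, g x ∧
    pvar p est ≤ (b / a) * (∑ x ∈ H, g x) * (∑ x, g x) / k := by
  have hf0 : ∀ x, 0 ≤ f x := fun x => (mul_nonneg ha.le (hg0 x)).trans (hlow x)
  obtain rfl : p = ppsProb k f := funext hp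
  obtain rfl : est = fun S => ∑ x ∈ S ∩ H, g x / ppsProb k f x := funext hest
  refine ⟨pexpect_sum_inter_div _ _ _ fun x _ hpx => ?_, ?_⟩
  · by_contra hgx
    have hfx : 0 < f x := (mul_pos ha ((hg0 x).lt_of_ne' hgx)).trans_le (hlow x)
    exact (ppsProb_pos hk hf0 hfx).ne' hpx
  rw [pvar_sum_inter]
  calc _ ≤ ∑ x ∈ H, b / a * g x * (∑ y, g y) / k :=
        sum_le_sum fun x _ => sq_div_ppsProb_mul_le ha hk hg0 hlow hhigh x
    _ = _ := by rw [← sum_div, ← sum_mul, ← mul_sum]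

/-- Estimation quality of Poisson pps sampling for `f`, used to
estimate `sum(g; H)`: the inverse-probability estimator is unbiased and its variance
is at most `ρ · sum(g;H) · sum(g) / k` (equivalently, its CV is at most
`sqrt(ρ / (q^{(g)}(H) · k))`). -/
theorem stmt0 {X : Type*} [Fintype X] [DecidableEq X]
    (f g : X → ℝ) (hf0 : ∀ x, 0 ≤ f x) (hg0 : ∀ x, 0 ≤ g x)
    (hfs : 0 < ∑ x, f x) (hgs : 0 < ∑ x, g x)
    (a b : ℝ) (ha : 0 < a) (hab : a ≤ b)
    (hlow : ∀ x, a * g x ≤ f x) (hhigh : ∀ x, f x ≤ b * g x)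
    (k : ℝ) (hk : 0 < k)
    (p : X → ℝ) (hp : ∀ x, p x = min 1 (k * f x / ∑ y, f y))
    (H : Finset X) (hH : 0 < ∑ x ∈ H, g x)
    (est : Finset X → ℝ) (hest : ∀ S, est S = ∑ x ∈ S ∩ H, g x / p x) :
    pexpect p est = ∑ x ∈ H, g x ∧
    pvar p est ≤ (b / a) * (∑ x ∈ H, g x) * (∑ x, g x) / k :=
  stmt0_general f g hg0 a b ha hlow hhigh k hk p hp H est hest
end

section
/- Let X be a finite set of keys, let f, g : X → ℝ≥0 satisfy sum(f) > 0 and sum(g) > 0, and suppose a·g_x ≤ f_x ≤ b·g_x for all x with 0 < a ≤ b; set ρ = b/a. Fix k > 0, let S include each key x independently with probability p_x = min{1, k·f_x/sum(f)}, and let Ŝ(g;H) = Σ_{x∈S∩H} g_x/p_x. Then for every H ⊆ X with sum(g;H) > 0 and every δ > 1: Pr[Ŝ(g;H) − sum(g;H) > δ·sum(g;H)] ≤ exp(−q^{(g)}(H)·k·ρ^{−2}·δ/3). -/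
open Finset

open scoped Classical in
/-- Probability of an event of the sample. -/
noncomputable def pprob {X : Type*} [Fintype X] [DecidableEq X]
    (p : X → ℝ) (E : Finset X → Prop) : ℝ :=
  ∑ S : Finset X, if E S then sampleProb p S else 0

/-!
Write the estimator as `∑ x ∈ S, c x` with `c x = g x / p x` on `H` and `0` elsewhere; its
mean is `μ = ∑ x ∈ H, g x`. A key sampled with probability `p x < 1` has weight
`c x ≤ M = sum(f) / (k a)`, and keys with `p x = 1` are deterministic. Comparing each Bernoulli
factor of the moment generating function with a scaled Poisson one gives the Chernoff–Bennett
bound `exp (-(μ / M) ((1 + δ) log (1 + δ) - δ))`, at most `exp (-δ μ / (3 M))` for `δ ≥ 1`;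
finally `sum(f) ≤ b · sum(g)` and `a ≤ b` turn `μ / M` into `q(H) · k · ρ⁻²`.
-/

open Real

lemma exp_mul_le_chord {t c M : ℝ} (hc : 0 ≤ c) (hcM : c ≤ M) (hM : 0 < M) :
    exp (t * c) ≤ 1 + c / M * (exp (t * M) - 1) := by
  have h := convexOn_exp.2 (Set.mem_univ 0) (Set.mem_univ (t * M))
    (sub_nonneg.2 ((div_le_one hM).2 hcM)) (div_nonneg hc hM.le) (sub_add_cancel 1 (c / M))
  simp only [smul_eq_mul, mul_zero, zero_add, exp_zero, mul_one,
    show c / M * (t * M) = t * c by field_simp] at h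
  linarith

/-- The moment generating function of `c` times a Bernoulli(`q`) variable is dominated by that of
`M` times a Poisson variable of mean `q * c / M`. -/
lemma mul_exp_add_one_sub_le_exp {q c M : ℝ} (t : ℝ) (hq0 : 0 ≤ q) (hc : 0 ≤ c) (hM : 0 < M)
    (hcM : c ≤ M ∨ q = 1) :
    q * exp (t * c) + (1 - q) ≤ exp (q * c * (exp (t * M) - 1) / M) := by
  rcases hcM with hcM | rfl
  · calc q * exp (t * c) + (1 - q)
        ≤ q * (1 + c / M * (exp (t * M) - 1)) + (1 - q) := by
          gcongr; exact exp_mul_le_chord hc hcM hM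
      _ = q * c * (exp (t * M) - 1) / M + 1 := by field_simp; ring
      _ ≤ exp (q * c * (exp (t * M) - 1) / M) := add_one_le_exp _
  · have htM : t ≤ (exp (t * M) - 1) / M := by
      rw [le_div_iff₀ hM]; linarith [add_one_le_exp (t * M)]
    calc 1 * exp (t * c) + (1 - 1) = exp (t * c) := by ring
      _ ≤ exp (1 * c * (exp (t * M) - 1) / M) := by
          rw [mul_div_assoc, one_mul, mul_comm t]
          gcongr

lemma third_le_mul_log_sub {δ : ℝ} (hδ : 1 ≤ δ) :
    δ / 3 ≤ (1 + δ) * log (1 + δ) - δ := by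
  have hsplit : log (1 + δ) = log 2 + log ((1 + δ) / 2) := by
    rw [log_div (by linarith) two_ne_zero]; ring
  have hhalf : 1 - ((1 + δ) / 2)⁻¹ ≤ log ((1 + δ) / 2) :=
    one_sub_inv_le_log_of_pos (by linarith)
  have hmul : (1 + δ) * (1 - ((1 + δ) / 2)⁻¹) = δ - 1 := by
    field_simp; ring
  have hlog2 := log_two_gt_d9
  nlinarith [mul_le_mul_of_nonneg_left hhalf (by linarith : (0 : ℝ) ≤ 1 + δ)]

section PoissonSampling

variable {X : Type*} [Fintype X] [DecidableEq X] {p : X → ℝ}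

lemma sampleProb_nonneg (hp0 : ∀ x, 0 ≤ p x) (hp1 : ∀ x, p x ≤ 1) (S : Finset X) :
    0 ≤ sampleProb p S :=
  mul_nonneg (prod_nonneg fun x _ => hp0 x) (prod_nonneg fun x _ => sub_nonneg.2 (hp1 x))

lemma pprob_mono (hp0 : ∀ x, 0 ≤ p x) (hp1 : ∀ x, p x ≤ 1) {E E' : Finset X → Prop}
    (h : ∀ S, E S → E' S) : pprob p E ≤ pprob p E' := by
  unfold pprob
  gcongr with S
  split_ifs with hE hE'
  exacts [le_rfl, absurd (h S hE) hE', sampleProb_nonneg hp0 hp1 S, le_rfl]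

lemma sum_sampleProb_mul_prod (w : X → ℝ) :
    ∑ S, sampleProb p S * ∏ x ∈ S, w x = ∏ x, (p x * w x + (1 - p x)) := by
  rw [prod_add, powerset_univ]
  refine sum_congr rfl fun S _ => ?_
  rw [sampleProb, compl_eq_univ_sdiff, prod_mul_distrib]
  ring

lemma pprob_le_exp_mul_sum (hp0 : ∀ x, 0 ≤ p x) (hp1 : ∀ x, p x ≤ 1) (Z : Finset X → ℝ)
    (r : ℝ) {t : ℝ} (ht : 0 ≤ t) :
    pprob p (fun S => r ≤ Z S) ≤ exp (-(t * r)) * ∑ S, sampleProb p S * exp (t * Z S) := by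
  unfold pprob
  rw [mul_sum]
  gcongr with S
  have hS := sampleProb_nonneg hp0 hp1 S
  split_ifs with hr
  · rw [mul_left_comm, ← exp_add]
    exact le_mul_of_one_le_right hS (one_le_exp (by nlinarith))
  · positivity

lemma sum_sampleProb_mul_exp_le (hp0 : ∀ x, 0 ≤ p x) (hp1 : ∀ x, p x ≤ 1) {c : X → ℝ}
    (hc0 : ∀ x, 0 ≤ c x) {M : ℝ} (hM : 0 < M) (hcM : ∀ x, c x ≤ M ∨ p x = 1) (t : ℝ) :
    ∑ S, sampleProb p S * exp (t * ∑ x ∈ S, c x) ≤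
      exp ((∑ x, p x * c x) * (exp (t * M) - 1) / M) := by
  simp_rw [mul_sum, exp_sum, sum_sampleProb_mul_prod, sum_mul, sum_div, exp_sum]
  refine prod_le_prod (fun x _ => ?_) fun x _ =>
    mul_exp_add_one_sub_le_exp t (hp0 x) (hc0 x) hM (hcM x)
  nlinarith [hp0 x, hp1 x, exp_pos (t * c x)]

theorem pprob_chernoff (hp0 : ∀ x, 0 ≤ p x) (hp1 : ∀ x, p x ≤ 1) {c : X → ℝ}
    (hc0 : ∀ x, 0 ≤ c x) {M : ℝ} (hM : 0 < M) (hcM : ∀ x, c x ≤ M ∨ p x = 1)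
    {δ : ℝ} (hδ : 0 ≤ δ) :
    pprob p (fun S => (1 + δ) * ∑ x, p x * c x ≤ ∑ x ∈ S, c x) ≤
      exp (-((∑ x, p x * c x) / M * ((1 + δ) * log (1 + δ) - δ))) := by
  set μ := ∑ x, p x * c x
  -- the optimal exponent `t = log (1 + δ) / M`
  have hexp : exp (log (1 + δ) / M * M) = 1 + δ := by
    rw [div_mul_cancel₀ _ hM.ne', exp_log (by linarith)]
  calc _ ≤ exp (-(log (1 + δ) / M * ((1 + δ) * μ))) *
          ∑ S, sampleProb p S * exp (log (1 + δ) / M * ∑ x ∈ S, c x) :=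
        pprob_le_exp_mul_sum hp0 hp1 _ _ (div_nonneg (log_nonneg (by linarith)) hM.le)
    _ ≤ exp (-(log (1 + δ) / M * ((1 + δ) * μ))) *
          exp (μ * (exp (log (1 + δ) / M * M) - 1) / M) := by
        gcongr; exact sum_sampleProb_mul_exp_le hp0 hp1 hc0 hM hcM _
    _ = _ := by rw [← exp_add, hexp]; congr 1; ring

end PoissonSampling

lemma div_min_one_le_or_eq_one {f g F k a : ℝ} (hF : 0 < F) (hk : 0 < k) (ha : 0 < a)
    (hg : 0 ≤ g) (hag : a * g ≤ f) :
    g / min 1 (k * f / F) ≤ F / (k * a) ∨ min 1 (k * f / F) = 1 := by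
  rcases le_total 1 (k * f / F) with h | h
  · exact Or.inr (min_eq_left h)
  · left
    rw [min_eq_right h]
    rcases (le_trans (mul_nonneg ha.le hg) hag).eq_or_lt with rfl | hf
    · obtain rfl : g = 0 := by nlinarith
      rw [zero_div]; positivity
    · rw [div_div_eq_mul_div, div_le_div_iff₀ (by positivity) (by positivity)]
      nlinarith [mul_le_mul_of_nonneg_left hag (by positivity : 0 ≤ F * k)]

lemma min_one_mul_div_cancel {f g F k a : ℝ} (hF : 0 < F) (hk : 0 < k) (ha : 0 < a)
    (hg : 0 ≤ g) (hag : a * g ≤ f) :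
    min 1 (k * f / F) * (g / min 1 (k * f / F)) = g := by
  refine mul_div_cancel_of_imp' fun h => ?_
  have hkf : k * f / F = 0 := by
    rcases min_choice 1 (k * f / F) with h' | h' <;> rw [h'] at h
    exacts [absurd h one_ne_zero, h]
  have hf : f = 0 := by simpa [hk.ne', hF.ne'] using hkf
  nlinarith

section InverseProbabilityWeights

variable {X : Type*} [DecidableEq X] {f g p : X → ℝ} {a k : ℝ} (H : Finset X)

noncomputable def invProbWeight (p g : X → ℝ) (H : Finset X) (x : X) : ℝ :=
  if x ∈ H then g x / p x else 0

lemma sum_inter_div_eq_sum_invProbWeight (S : Finset X) :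
    ∑ x ∈ S ∩ H, g x / p x = ∑ x ∈ S, invProbWeight p g H x :=
  (sum_ite_mem S H _).symm

lemma invProbWeight_nonneg (hg0 : ∀ x, 0 ≤ g x) (hp0 : ∀ x, 0 ≤ p x) (x : X) :
    0 ≤ invProbWeight p g H x := by
  unfold invProbWeight
  split_ifs
  exacts [div_nonneg (hg0 x) (hp0 x), le_rfl]

lemma invProbWeight_le_or_eq_one [Fintype X] (hfs : 0 < ∑ x, f x) (hk : 0 < k) (ha : 0 < a)
    (hg0 : ∀ x, 0 ≤ g x) (hlow : ∀ x, a * g x ≤ f x)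
    (hp : ∀ x, p x = min 1 (k * f x / ∑ y, f y))
    (x : X) : invProbWeight p g H x ≤ (∑ y, f y) / (k * a) ∨ p x = 1 := by
  unfold invProbWeight
  split_ifs
  · rw [hp x]; exact div_min_one_le_or_eq_one hfs hk ha (hg0 x) (hlow x)
  · exact Or.inl (div_nonneg hfs.le (mul_pos hk ha).le)

lemma sum_mul_invProbWeight [Fintype X] (hfs : 0 < ∑ x, f x) (hk : 0 < k) (ha : 0 < a)
    (hg0 : ∀ x, 0 ≤ g x) (hlow : ∀ x, a * g x ≤ f x)
    (hp : ∀ x, p x = min 1 (k * f x / ∑ y, f y)) :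
    ∑ x, p x * invProbWeight p g H x = ∑ x ∈ H, g x := by
  rw [← Fintype.sum_ite_mem H g]
  refine sum_congr rfl fun x _ => ?_
  unfold invProbWeight
  split_ifs
  · rw [hp x]; exact min_one_mul_div_cancel hfs hk ha (hg0 x) (hlow x)
  · exact mul_zero _

end InverseProbabilityWeights

lemma div_mul_mul_inv_div_sq_le {μ G F k a b : ℝ} (hμ : 0 ≤ μ) (hG : 0 < G) (hF : 0 < F)
    (hk : 0 < k) (ha : 0 < a) (hab : a ≤ b) (hFG : F ≤ b * G) :
    μ / G * k * ((b / a) ^ 2)⁻¹ ≤ μ / (F / (k * a)) := by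
  have hb : 0 < b := ha.trans_le hab
  field_simp
  have haF : a * F ≤ b ^ 2 * G := by nlinarith
  nlinarith [mul_le_mul_of_nonneg_left haF (by positivity : 0 ≤ μ * k * a)]

theorem stmt3_general {X : Type*} [Fintype X] [DecidableEq X]
    (f g : X → ℝ) (hf0 : ∀ x, 0 ≤ f x) (hg0 : ∀ x, 0 ≤ g x)
    (hfs : 0 < ∑ x, f x) (hgs : 0 < ∑ x, g x)
    (a b : ℝ) (ha : 0 < a) (hab : a ≤ b)
    (hlow : ∀ x, a * g x ≤ f x) (hhigh : ∀ x, f x ≤ b * g x)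
    (k : ℝ) (hk : 0 < k)
    (p : X → ℝ) (hp : ∀ x, p x = min 1 (k * f x / ∑ y, f y))
    (H : Finset X)
    (est : Finset X → ℝ) (hest : ∀ S, est S = ∑ x ∈ S ∩ H, g x / p x)
    (δ : ℝ) (hδ : 1 < δ) :
    pprob p (fun S => est S - ∑ x ∈ H, g x > δ * ∑ x ∈ H, g x) ≤
      Real.exp (-((∑ x ∈ H, g x) / (∑ x, g x) * k * ((b / a) ^ 2)⁻¹ * δ / 3)) := by
  have hp0 : ∀ x, 0 ≤ p x := fun x => (hp x).symm ▸ le_min zero_le_one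
    (div_nonneg (mul_nonneg hk.le (hf0 x)) hfs.le)
  have hp1 : ∀ x, p x ≤ 1 := fun x => (hp x).symm ▸ min_le_left _ _
  have hmean := sum_mul_invProbWeight H hfs hk ha hg0 hlow hp
  have hevent : ∀ S, est S - ∑ x ∈ H, g x > δ * ∑ x ∈ H, g x →
      (1 + δ) * ∑ x, p x * invProbWeight p g H x ≤ ∑ x ∈ S, invProbWeight p g H x := by
    intro S hS
    rw [hmean, ← sum_inter_div_eq_sum_invProbWeight, ← hest]
    linarith
  have hμ : 0 ≤ ∑ x ∈ H, g x := sum_nonneg fun x _ => hg0 x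
  have hFG : ∑ x, f x ≤ b * ∑ x, g x := by rw [mul_sum]; exact sum_le_sum fun x _ => hhigh x
  calc _ ≤ _ := pprob_mono hp0 hp1 hevent
    _ ≤ _ := pprob_chernoff hp0 hp1 (invProbWeight_nonneg H hg0 hp0) (div_pos hfs (mul_pos hk ha))
          (invProbWeight_le_or_eq_one H hfs hk ha hg0 hlow hp) (by linarith)
    _ ≤ _ := by
      rw [hmean, exp_le_exp, neg_le_neg_iff, mul_div_assoc]
      exact mul_le_mul (div_mul_mul_inv_div_sq_le hμ hgs hfs hk ha hab hFG)
        (third_le_mul_log_sub hδ.le) (by positivity) (div_nonneg hμ (by positivity))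

/-- **Statement 2.** One-sided multiplicative Chernoff bound for the
inverse-probability estimator over a Poisson pps sample, with disparity `ρ = b/a`,
for relative error `δ > 1` (one-sided). -/
theorem stmt3 {X : Type*} [Fintype X] [DecidableEq X]
    (f g : X → ℝ) (hf0 : ∀ x, 0 ≤ f x) (hg0 : ∀ x, 0 ≤ g x)
    (hfs : 0 < ∑ x, f x) (hgs : 0 < ∑ x, g x)
    (a b : ℝ) (ha : 0 < a) (hab : a ≤ b)
    (hlow : ∀ x, a * g x ≤ f x) (hhigh : ∀ x, f x ≤ b * g x)
    (k : ℝ) (hk : 0 < k)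
    (p : X → ℝ) (hp : ∀ x, p x = min 1 (k * f x / ∑ y, f y))
    (H : Finset X) (hH : 0 < ∑ x ∈ H, g x)
    (est : Finset X → ℝ) (hest : ∀ S, est S = ∑ x ∈ S ∩ H, g x / p x)
    (δ : ℝ) (hδ : 1 < δ) :
    pprob p (fun S => est S - ∑ x ∈ H, g x > δ * ∑ x ∈ H, g x) ≤
      Real.exp (-((∑ x ∈ H, g x) / (∑ x, g x) * k * ((b / a) ^ 2)⁻¹ * δ / 3)) :=
  stmt3_general f g hf0 hg0 hfs hgs a b ha hab hlow hhigh k hk p hp H est hest δ hδ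
end

section
/- Let X be a finite set of keys, let G be a finite set of functions g : X → ℝ≥0 each with sum(g) > 0, let α : G → ℝ≥0, and let f = Σ_{g∈G} α_g·g satisfy sum(f) > 0. Then for every k > 0 and every key x ∈ X: min{1, k·f_x/sum(f)} ≤ max_{g∈G} min{1, k·g_x/sum(g)}. In particular, f_x/sum(f) ≤ max_{g∈G} g_x/sum(g), so the multi-objective pps probabilities for G ∪ {f} with uniform size parameter k coincide with those for G, and any nonnegative linear combination of functions of G lies in the sampling closure of G. -/
open Finset

/-! The pps ratio `f x / sum f` of a nonnegative combination `f = Σ α_g g` is a mediant of the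
ratios `g x / sum g`, weighted by `α_g · sum g`, so it is at most their maximum. Capping
`t ↦ min 1 (k t)` is monotone, hence commutes with that maximum, which gives the bound on pps
probabilities; adding a dominated function to `G` then leaves the maximum unchanged. -/

theorem Finset.sum_mul_div_sum_mul_le_sup' {ι : Type*} (s : Finset ι) (hs : s.Nonempty)
    (w a b : ι → ℝ) (hw : ∀ i ∈ s, 0 ≤ w i) (hb : ∀ i ∈ s, 0 < b i)
    (hwb : 0 < ∑ i ∈ s, w i * b i) :
    (∑ i ∈ s, w i * a i) / (∑ i ∈ s, w i * b i) ≤ s.sup' hs (fun i => a i / b i) := by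
  rw [div_le_iff₀ hwb, mul_sum]
  refine sum_le_sum fun i hi => ?_
  calc w i * a i = a i / b i * (w i * b i) := by field_simp [(hb i hi).ne']
    _ ≤ s.sup' hs (fun i => a i / b i) * (w i * b i) :=
      mul_le_mul_of_nonneg_right (le_sup' (fun i => a i / b i) hi)
        (mul_nonneg (hw i hi) (hb i hi).le)

theorem Finset.sum_univ_sum_mul {X ι : Type*} [Fintype X] (s : Finset ι) (α : ι → ℝ)
    (g : ι → X → ℝ) :
    ∑ x, ∑ i ∈ s, α i * g i x = ∑ i ∈ s, α i * ∑ x, g i x := by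
  rw [sum_comm]
  simp only [mul_sum]

theorem min_one_mul_le_sup'_min_one_mul {ι : Type*} (s : Finset ι) (hs : s.Nonempty)
    (r : ι → ℝ) {k t : ℝ} (hk : 0 ≤ k) (ht : t ≤ s.sup' hs r) :
    min 1 (k * t) ≤ s.sup' hs (fun i => min 1 (k * r i)) := by
  have hmono : Monotone fun t : ℝ => min 1 (k * t) :=
    fun _ _ h => min_le_min le_rfl (mul_le_mul_of_nonneg_left h hk)
  calc min 1 (k * t) ≤ min 1 (k * s.sup' hs r) := hmono ht
    _ = s.sup' hs (fun i => min 1 (k * r i)) :=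
      apply_sup'_eq_sup'_comp hs (fun t => min 1 (k * t)) (fun x y => hmono.map_sup x y)

theorem stmt8_general {X : Type*} [Fintype X] [DecidableEq (X → ℝ)]
    (G : Finset (X → ℝ)) (hG : G.Nonempty)
    (hgs : ∀ g ∈ G, 0 < ∑ x, g x)
    (α : (X → ℝ) → ℝ) (hα : ∀ g ∈ G, 0 ≤ α g)
    (f : X → ℝ) (hf : f = fun x => ∑ g ∈ G, α g * g x)
    (hfs : 0 < ∑ x, f x) :
    ∀ k : ℝ, 0 < k → ∀ x : X,
      min 1 (k * f x / ∑ y, f y) ≤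
        G.sup' hG (fun g => min 1 (k * g x / ∑ y, g y)) ∧
      f x / ∑ y, f y ≤ G.sup' hG (fun g => g x / ∑ y, g y) ∧
      (insert f G).sup' (Finset.insert_nonempty f G)
          (fun g => min 1 (k * g x / ∑ y, g y)) =
        G.sup' hG (fun g => min 1 (k * g x / ∑ y, g y)) := by
  intro k hk x
  have hsum : ∑ y, f y = ∑ g ∈ G, α g * ∑ y, g y := by
    subst hf
    exact sum_univ_sum_mul G α id
  have hratio : f x / ∑ y, f y ≤ G.sup' hG (fun g => g x / ∑ y, g y) := by
    rw [hsum] at hfs ⊢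
    subst hf
    exact sum_mul_div_sum_mul_le_sup' G hG α (fun g => g x) (fun g => ∑ y, g y) hα hgs hfs
  have hpps : min 1 (k * f x / ∑ y, f y) ≤
      G.sup' hG (fun g => min 1 (k * g x / ∑ y, g y)) := by
    simp only [mul_div_assoc]
    exact min_one_mul_le_sup'_min_one_mul G hG _ hk.le hratio
  refine ⟨hpps, hratio, ?_⟩
  rw [sup'_insert hG]
  exact sup_of_le_right hpps

/-- Sampling closure under nonnegative linear combinations: for
`f = Σ_{g∈G} α_g·g`, the pps probability of `f` is dominated pointwise by the
multi-objective pps probability of `G`; in particular the base pps probabilities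
satisfy `f_x/sum(f) ≤ max_{g∈G} g_x/sum(g)`, and the multi-objective pps
probabilities for `G ∪ {f}` coincide with those for `G`. -/
theorem stmt8 {X : Type*} [Fintype X] [DecidableEq (X → ℝ)]
    (G : Finset (X → ℝ)) (hG : G.Nonempty)
    (hg0 : ∀ g ∈ G, ∀ x, 0 ≤ g x) (hgs : ∀ g ∈ G, 0 < ∑ x, g x)
    (α : (X → ℝ) → ℝ) (hα : ∀ g ∈ G, 0 ≤ α g)
    (f : X → ℝ) (hf : f = fun x => ∑ g ∈ G, α g * g x)
    (hfs : 0 < ∑ x, f x) :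
    ∀ k : ℝ, 0 < k → ∀ x : X,
      min 1 (k * f x / ∑ y, f y) ≤
        G.sup' hG (fun g => min 1 (k * g x / ∑ y, g y)) ∧
      f x / ∑ y, f y ≤ G.sup' hG (fun g => g x / ∑ y, g y) ∧
      (insert f G).sup' (Finset.insert_nonempty f G)
          (fun g => min 1 (k * g x / ∑ y, g y)) =
        G.sup' hG (fun g => min 1 (k * g x / ∑ y, g y)) :=
  stmt8_general G hG hgs α hα f hf hfs
end

section
/- Let X be a finite set of keys with weights w : X → ℝ, fix a key x, and let i = |{y ∈ X : w_y ≥ w_x}|. Then for every monotone non-decreasing function f : ℝ → ℝ≥0 with Σ_{y∈X} f(w_y) > 0, one has f(w_x)/Σ_{y∈X} f(w_y) ≤ 1/i, and this bound is attained by the threshold function thresh_{w_x} (where thresh_T(w) = 1 if w ≥ T and 0 otherwise). Hence the base multi-objective pps probability of x over the family M of all monotone non-decreasing functions, p^{(M,1)}_x = sup over monotone f with positive sum of f(w_x)/Σ_y f(w_y), equals 1/i. -/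
open Finset

/-!
A monotone `f` gives each of the `i` keys `y` with `w x ≤ w y` a value at least `f (w x)`, so
`i * f (w x) ≤ ∑ y, f (w y)`, i.e. the pps probability of `x` is at most `1 / i`. The threshold
function `thresh_{w x}` is `1` on exactly those `i` keys and `0` elsewhere, so it attains `1 / i`.
-/

def thresh {α : Type*} [Preorder α] [DecidableLE α] (T t : α) : ℝ := if T ≤ t then 1 else 0

section Thresh

variable {α : Type*} [Preorder α] [DecidableLE α]

lemma thresh_monotone (T : α) : Monotone (thresh T) := by
  intro a b hab
  unfold thresh
  split_ifs with ha hb <;> first | exact absurd (ha.trans hab) hb | norm_num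

lemma thresh_nonneg (T t : α) : 0 ≤ thresh T t := by
  unfold thresh
  split_ifs <;> norm_num

lemma thresh_self (T : α) : thresh T T = 1 := if_pos le_rfl

lemma sum_thresh {ι : Type*} (s : Finset ι) (w : ι → α) (T : α) :
    ∑ y ∈ s, thresh T (w y) = #(s.filter fun y => T ≤ w y) := by
  simp only [thresh, sum_boole]

end Thresh

section PpsBound

variable {ι α : Type*} [Preorder α] [DecidableLE α] (s : Finset ι) (w : ι → α)

lemma card_filter_le_pos {x : ι} (hx : x ∈ s) : 0 < #(s.filter fun y => w x ≤ w y) :=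
  card_pos.2 ⟨x, mem_filter.2 ⟨hx, le_rfl⟩⟩

lemma card_filter_le_mul_le_sum {f : α → ℝ} (hf : Monotone f) (hf₀ : ∀ t, 0 ≤ f t) (a : α) :
    #(s.filter fun y => a ≤ w y) * f a ≤ ∑ y ∈ s, f (w y) :=
  calc (#(s.filter fun y => a ≤ w y) : ℝ) * f a = ∑ y ∈ s.filter (fun y => a ≤ w y), f a := by
        rw [sum_const, nsmul_eq_mul]
    _ ≤ ∑ y ∈ s.filter (fun y => a ≤ w y), f (w y) :=
        sum_le_sum fun y hy => hf (mem_filter.1 hy).2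
    _ ≤ ∑ y ∈ s, f (w y) :=
        sum_le_sum_of_subset_of_nonneg (filter_subset _ _) fun y _ _ => hf₀ (w y)

lemma div_sum_le_one_div_card_filter {f : α → ℝ} (hf : Monotone f) (hf₀ : ∀ t, 0 ≤ f t)
    {x : ι} (hx : x ∈ s) :
    f (w x) / ∑ y ∈ s, f (w y) ≤ 1 / #(s.filter fun y => w x ≤ w y) := by
  have hcard : (0 : ℝ) < #(s.filter fun y => w x ≤ w y) := by
    exact_mod_cast card_filter_le_pos s w hx
  rcases (sum_nonneg fun y _ => hf₀ (w y)).eq_or_lt with hS | hS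
  · rw [← hS, div_zero]
    positivity
  · rw [div_le_div_iff₀ hS hcard, one_mul, mul_comm]
    exact card_filter_le_mul_le_sum s w hf hf₀ (w x)

lemma thresh_div_sum_thresh (x : ι) :
    thresh (w x) (w x) / ∑ y ∈ s, thresh (w x) (w y) = 1 / #(s.filter fun y => w x ≤ w y) := by
  rw [thresh_self, sum_thresh]

end PpsBound

/-- For a key `x` with `i = |{y : w_y ≥ w_x}|`, every monotone
non-decreasing nonnegative function of the weights has base pps probability of `x`
at most `1/i`; the bound is attained by the threshold function `thresh_{w_x}`, so
the base multi-objective pps probability of `x` over all monotone functions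
equals `1/i` (attained supremum, i.e., `IsGreatest`). -/
theorem stmt10 {X : Type*} [Fintype X] (w : X → ℝ) (x : X)
    (i : ℕ) (hi : i = (Finset.univ.filter fun y => w x ≤ w y).card) :
    (∀ f : ℝ → ℝ, Monotone f → (∀ t, 0 ≤ f t) → 0 < ∑ y, f (w y) →
      f (w x) / ∑ y, f (w y) ≤ 1 / (i : ℝ)) ∧
    (fun t => if w x ≤ t then (1 : ℝ) else 0) (w x) /
        (∑ y, (fun t => if w x ≤ t then (1 : ℝ) else 0) (w y)) = 1 / (i : ℝ) ∧
    IsGreatest {r : ℝ | ∃ f : ℝ → ℝ, Monotone f ∧ (∀ t, 0 ≤ f t) ∧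
        0 < ∑ y, f (w y) ∧ r = f (w x) / ∑ y, f (w y)} (1 / (i : ℝ)) := by
  subst hi
  have hbound : ∀ f : ℝ → ℝ, Monotone f → (∀ t, 0 ≤ f t) →
      f (w x) / ∑ y, f (w y) ≤ 1 / #(univ.filter fun y => w x ≤ w y) :=
    fun f hf hf₀ => div_sum_le_one_div_card_filter univ w hf hf₀ (mem_univ x)
  have hattain := thresh_div_sum_thresh univ w x
  have hpos : 0 < ∑ y, thresh (w x) (w y) := by
    rw [sum_thresh]
    exact_mod_cast card_filter_le_pos univ w (mem_univ x)
  refine ⟨fun f hf hf₀ _ => hbound f hf hf₀, hattain,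
    ⟨thresh (w x), thresh_monotone _, thresh_nonneg _, hpos, hattain.symm⟩, ?_⟩
  rintro r ⟨f, hf, hf₀, -, rfl⟩
  exact hbound f hf hf₀
end

section
/- Let X be a set of n keys with pairwise distinct weights w : X → ℝ, let (u_x)_{x∈X} be i.i.d. Uniform[0,1] random variables, and fix an integer k ≥ 1. Define the universal monotone bottom-k sample S = {x ∈ X : |{y ∈ X : w_y ≥ w_x and u_y < u_x}| < k}. Then E[|S|] = Σ_{i=1}^{n} min{1, k/i}, and if 3 ≤ k ≤ n then E[|S|] ≤ k·ln n. -/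
/-!
Key `x` is sampled iff the rank of `u_x` among the values of the `m_x = #{y | w_x ≤ w_y}` keys
of weight at least `w_x` is below `k`. Swapping two coordinates preserves the product measure,
so all keys of such a block `B` are below rank `k` with the same probability; and since the
values are a.s. distinct, the ranks in `B` are a permutation of `0, …, #B - 1`, so these
probabilities add up to `min k #B`. Hence `P(x ∈ S) = min(k, m_x) / m_x`, and `m_x` runs over
`1, …, n` as `x` runs over the keys. For the bound, the terms `i ≤ k` contribute `k ≤ k ln k`
(as `e < 3`), and the tail `k Σ_{k<i≤n} 1/i` is at most `k ∫_k^n dx/x = k (ln n - ln k)`.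
-/

open Finset MeasureTheory ProbabilityTheory

def rankIn {X α : Type*} [LinearOrder α] (B : Finset X) (f : X → α) (y : X) : ℕ :=
  #{z ∈ B | f z < f y}

namespace rankIn

variable {X α : Type*} [LinearOrder α] {B : Finset X} {f : X → α} {x y : X}

lemma lt_card (hy : y ∈ B) : rankIn B f y < #B :=
  card_lt_card <| filter_ssubset.2 ⟨y, hy, lt_irrefl _⟩

lemma lt_rankIn_of_lt (hx : x ∈ B) (hxy : f x < f y) : rankIn B f x < rankIn B f y :=
  card_lt_card <| (ssubset_iff_of_subset fun z hz => by
    simp only [mem_filter] at hz ⊢; exact ⟨hz.1, hz.2.trans hxy⟩).2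
    ⟨x, by simp [hx, hxy], by simp⟩

lemma injOn (hf : Set.InjOn f B) : Set.InjOn (rankIn B f) B := by
  intro x hx y hy hxy
  rcases lt_trichotomy (f x) (f y) with h | h | h
  · exact absurd hxy (lt_rankIn_of_lt hx h).ne
  · exact hf hx hy h
  · exact absurd hxy (lt_rankIn_of_lt hy h).ne'

lemma image_eq_range (hf : Set.InjOn f B) : B.image (rankIn B f) = range #B :=
  eq_of_subset_of_card_le (fun r hr => by
      obtain ⟨y, hy, rfl⟩ := mem_image.1 hr
      exact mem_range.2 (lt_card hy))
    (by rw [card_range, card_image_of_injOn (injOn hf)])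

lemma card_filter_lt (hf : Set.InjOn f B) (k : ℕ) :
    #{y ∈ B | rankIn B f y < k} = min k #B := by
  rw [← card_image_of_injOn ((injOn hf).mono (filter_subset _ _)),
    ← filter_image (p := (· < k)), image_eq_range hf,
    show {r ∈ range #B | r < k} = range (min k #B) by ext; simp [and_comm], card_range]

lemma comp_perm (σ : Equiv.Perm X) (hσ : ∀ z, σ z ∈ B ↔ z ∈ B) :
    rankIn B (f ∘ σ) y = rankIn B f (σ y) :=
  card_equiv σ fun z => by simp [hσ]

end rankIn

lemma sum_card_filter_le_eq_sum_Icc {X α M : Type*} [Fintype X] [LinearOrder α]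
    [AddCommMonoid M] {w : X → α} (hw : Function.Injective w) (f : ℕ → M) :
    ∑ x, f #{y | w x ≤ w y} = ∑ i ∈ Icc 1 (Fintype.card X), f i := by
  classical
  set r := rankIn univ (OrderDual.toDual ∘ w) with hr
  have hr_inj : Set.InjOn (OrderDual.toDual ∘ w) (univ : Finset X) :=
    (OrderDual.toDual.injective.comp hw).injOn
  have hcard : ∀ x, #{y | w x ≤ w y} = r x + 1 := fun x => by
    rw [hr, rankIn, ← card_insert_of_notMem (s := {z | _}) (a := x) (by simp)]
    congr 1
    ext y
    simp [le_iff_lt_or_eq, hw.eq_iff, eq_comm, or_comm]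
  rw [sum_congr rfl fun x _ => congrArg f (hcard x),
    ← sum_image (g := r) (f := fun i => f (i + 1)) (rankIn.injOn hr_inj),
    rankIn.image_eq_range hr_inj, card_univ, range_eq_Ico, sum_Ico_add', zero_add,
    Ico_add_one_right_eq_Icc]

lemma integral_card_filter {Ω ι : Type*} [MeasurableSpace Ω] {μ : Measure Ω}
    [IsFiniteMeasure μ] (s : Finset ι) {E : ι → Set Ω} (hE : ∀ i, MeasurableSet (E i))
    [∀ i, DecidablePred (· ∈ E i)] :
    ∫ ω, (#{i ∈ s | ω ∈ E i} : ℝ) ∂μ = ∑ i ∈ s, μ.real (E i) := by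
  simp_rw [natCast_card_filter, ← Set.indicator_apply (E _) (fun _ => (1 : ℝ))]
  rw [integral_finsetSum _ fun i _ => (integrable_const 1).indicator (hE i)]
  exact sum_congr rfl fun i _ => integral_indicator_one (hE i)

lemma measurableSet_rankIn_lt {X : Type*} (B : Finset X) (y : X) (k : ℕ) :
    MeasurableSet {ω : X → ℝ | rankIn B ω y < k} := by
  have : Measurable fun ω : X → ℝ => rankIn B ω y := by
    simp only [rankIn, card_filter]
    exact Finset.measurable_sum _ fun z _ => Measurable.ite
      (measurableSet_lt (measurable_pi_apply z) (measurable_pi_apply y)) measurable_const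
      measurable_const
  exact this measurableSet_Iio

section IID

variable {X : Type*} [Fintype X] {ν : Measure ℝ} [IsProbabilityMeasure ν]

lemma measure_pi_coord_eq_eq_zero [NullSingletonClass ν] {y z : X} (hyz : y ≠ z) :
    Measure.pi (fun _ : X => ν) {ω | ω y = ω z} = 0 := by
  set μ := Measure.pi fun _ : X => ν
  have hind : IndepFun (fun ω : X → ℝ => ω y) (fun ω => ω z) μ :=
    (iIndepFun_pi (X := fun _ => id) fun _ => aemeasurable_id).indepFun hyz
  have hlaw : μ.map (fun ω => (ω y, ω z)) = ν.prod ν := by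
    rw [(indepFun_iff_map_prod_eq_prod_map_map (measurable_pi_apply y).aemeasurable
      (measurable_pi_apply z).aemeasurable).1 hind,
      (measurePreserving_eval _ y).map_eq, (measurePreserving_eval _ z).map_eq]
  have hdiag : MeasurableSet {p : ℝ × ℝ | p.1 = p.2} :=
    measurableSet_eq_fun measurable_fst measurable_snd
  calc μ {ω | ω y = ω z} = μ.map (fun ω => (ω y, ω z)) {p | p.1 = p.2} := by
        rw [Measure.map_apply (by fun_prop) hdiag]; rfl
    _ = 0 := by
        rw [hlaw, Measure.prod_apply hdiag]
        simp [Set.preimage, measure_singleton]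

lemma ae_injective [NullSingletonClass ν] :
    ∀ᵐ ω ∂Measure.pi (fun _ : X => ν), Function.Injective ω := by
  have : {ω : X → ℝ | ¬ Function.Injective ω} ⊆
      ⋃ p : {p : X × X // p.1 ≠ p.2}, {ω | ω p.1.1 = ω p.1.2} := by
    intro ω hω
    simp only [Function.Injective, not_forall] at hω
    obtain ⟨a, b, hab, hne⟩ := hω
    exact Set.mem_iUnion.2 ⟨⟨(a, b), hne⟩, hab⟩
  exact measure_mono_null this (measure_iUnion_null fun p => measure_pi_coord_eq_eq_zero p.2)

lemma measurePreserving_comp_perm (σ : Equiv.Perm X) :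
    MeasurePreserving (fun ω : X → ℝ => ω ∘ σ)
      (Measure.pi fun _ => ν) (Measure.pi fun _ => ν) :=
  measurePreserving_arrowCongr' (fun _ => ν) (fun _ => ν) σ.symm (MeasurableEquiv.refl ℝ)
    fun _ => MeasurePreserving.id ν

lemma measure_rankIn_lt_eq {B : Finset X} {x y : X} (hx : x ∈ B) (hy : y ∈ B) (k : ℕ) :
    Measure.pi (fun _ : X => ν) {ω | rankIn B ω y < k} =
      Measure.pi (fun _ : X => ν) {ω | rankIn B ω x < k} := by
  classical
  have hσ : ∀ z, Equiv.swap x y z ∈ B ↔ z ∈ B := fun z => by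
    rcases eq_or_ne z x with rfl | hzx
    · simp [hx, hy]
    rcases eq_or_ne z y with rfl | hzy
    · simp [hx, hy]
    · rw [Equiv.swap_apply_of_ne_of_ne hzx hzy]
  have hpre : (fun ω : X → ℝ => ω ∘ Equiv.swap x y) ⁻¹' {ω | rankIn B ω x < k} =
      {ω | rankIn B ω y < k} := by
    ext ω
    simp [rankIn.comp_perm _ hσ]
  rw [← hpre, (measurePreserving_comp_perm _).measure_preimage
    (measurableSet_rankIn_lt B x k).nullMeasurableSet]

lemma measureReal_rankIn_lt [NullSingletonClass ν] {B : Finset X} {x : X} (hx : x ∈ B)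
    (k : ℕ) :
    (Measure.pi fun _ : X => ν).real {ω | rankIn B ω x < k} = min (k : ℝ) #B / #B := by
  classical
  set μ := Measure.pi fun _ : X => ν
  have hsum : ∑ y ∈ B, μ.real {ω | rankIn B ω y < k} = min (k : ℝ) #B := by
    rw [← integral_card_filter B fun y => measurableSet_rankIn_lt B y k,
      integral_congr_ae (g := fun _ => (min (k : ℝ) #B)), integral_const, probReal_univ,
      one_smul]
    filter_upwards [ae_injective] with ω hω
    simp [rankIn.card_filter_lt hω.injOn k]
  have hsymm : ∀ y ∈ B, μ.real {ω | rankIn B ω y < k} = μ.real {ω | rankIn B ω x < k} :=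
    fun y hy => congrArg ENNReal.toReal (measure_rankIn_lt_eq hx hy k)
  rw [sum_congr rfl hsymm, sum_const, nsmul_eq_mul] at hsum
  have hB : (#B : ℝ) ≠ 0 := by exact_mod_cast (card_pos.2 ⟨x, hx⟩).ne'
  rw [← hsum, mul_div_cancel_left₀ _ hB]

end IID

lemma sum_Ioc_inv_le_log_sub_log {a b : ℕ} (ha : 0 < a) (hab : a ≤ b) :
    ∑ i ∈ Ioc a b, (i : ℝ)⁻¹ ≤ Real.log b - Real.log a := by
  have ha' : (0 : ℝ) < a := by exact_mod_cast ha
  have hb' : (0 : ℝ) < b := ha'.trans_le (by exact_mod_cast hab)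
  rw [← Ico_add_one_add_one_eq_Ioc, ← sum_Ico_add']
  calc ∑ i ∈ Ico a b, ((i + 1 : ℕ) : ℝ)⁻¹ ≤ ∫ x in (a : ℝ)..b, x⁻¹ :=
        AntitoneOn.sum_le_integral_Ico hab (inv_antitoneOn_Icc_right ha')
    _ = Real.log b - Real.log a := by
        rw [integral_inv_of_pos ha' hb', Real.log_div hb'.ne' ha'.ne']

lemma sum_Icc_min_one_div_le_mul_log {k n : ℕ} (hk : 3 ≤ k) (hkn : k ≤ n) :
    ∑ i ∈ Icc 1 n, min 1 ((k : ℝ) / i) ≤ k * Real.log n := by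
  have hhead : ∑ i ∈ Ioc 0 k, min 1 ((k : ℝ) / i) = k := by
    rw [sum_congr rfl fun i hi => min_eq_left ((one_le_div (by simp_all)).2 (by simp_all)),
      sum_const, Nat.card_Ioc, nsmul_one, Nat.sub_zero]
  have htail : ∑ i ∈ Ioc k n, min 1 ((k : ℝ) / i) = k * ∑ i ∈ Ioc k n, (i : ℝ)⁻¹ := by
    rw [mul_sum]
    refine sum_congr rfl fun i hi => ?_
    rw [mem_Ioc] at hi
    rw [min_eq_right ((div_le_one (by exact_mod_cast (by omega : 0 < i))).2
      (by exact_mod_cast hi.1.le)), div_eq_mul_inv]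
  have hlog_k : 1 ≤ Real.log k := by
    rw [Real.le_log_iff_exp_le (by positivity)]
    have : (3 : ℝ) ≤ k := by exact_mod_cast hk
    linarith [Real.exp_one_lt_d9]
  have hlog_tail := sum_Ioc_inv_le_log_sub_log (by omega : 0 < k) hkn
  rw [show Icc 1 n = Ioc 0 n from Icc_add_one_left_eq_Ioc 0 n,
    ← sum_Ioc_consecutive _ (Nat.zero_le k) hkn, hhead, htail]
  have hk0 : (0 : ℝ) ≤ k := by positivity
  nlinarith

theorem stmt11_general {X : Type*} [Fintype X]
    (w : X → ℝ) (hw : Function.Injective w) (k : ℕ)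
    (μ : Measure (X → ℝ))
    (hμ : μ = Measure.pi fun _ : X => volume.restrict (Set.Icc (0 : ℝ) 1))
    (S : (X → ℝ) → Finset X)
    (hS : ∀ ω, S ω = Finset.univ.filter fun x =>
      (Finset.univ.filter fun y => w x ≤ w y ∧ ω y < ω x).card < k) :
    (∫ ω, ((S ω).card : ℝ) ∂μ) =
      ∑ i ∈ Finset.Icc 1 (Fintype.card X), min 1 ((k : ℝ) / (i : ℝ)) ∧
    (3 ≤ k → k ≤ Fintype.card X →
      (∫ ω, ((S ω).card : ℝ) ∂μ) ≤ (k : ℝ) * Real.log (Fintype.card X)) := by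
  have : IsProbabilityMeasure (volume.restrict (Set.Icc (0 : ℝ) 1)) := ⟨by simp⟩
  have hsize : ∀ ω,
      ((S ω).card : ℝ) = #{x | ω ∈ {ω | rankIn {y | w x ≤ w y} ω x < k}} :=
    fun ω => by rw [hS ω]; simp only [rankIn, filter_filter, Set.mem_ofPred_eq]
  have hmean :
      ∫ ω, ((S ω).card : ℝ) ∂μ = ∑ i ∈ Icc 1 (Fintype.card X), min 1 ((k : ℝ) / i) := by
    rw [hμ, integral_congr_ae (.of_forall hsize),
      integral_card_filter _ fun x => measurableSet_rankIn_lt _ x k]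
    rw [sum_congr rfl fun x _ => measureReal_rankIn_lt (by simp) k,
      sum_card_filter_le_eq_sum_Icc hw (fun i => min (k : ℝ) i / i)]
    refine sum_congr rfl fun i hi => ?_
    have hi0 : (i : ℝ) ≠ 0 := Nat.cast_ne_zero.2 (Nat.one_le_iff_ne_zero.1 (mem_Icc.1 hi).1)
    rw [← min_div_div_right (Nat.cast_nonneg i), div_self hi0, min_comm]
  exact ⟨hmean, fun hk3 hkn => hmean ▸ sum_Icc_min_one_div_le_mul_log hk3 hkn⟩

/-- The universal monotone bottom-`k` sample over `n` keys with
distinct weights and i.i.d. Uniform[0,1] values `u_x = ω x` has expected size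
exactly `Σ_{i=1}^n min{1, k/i}`, which is at most `k·ln n` when `3 ≤ k ≤ n`. -/
theorem stmt11 {X : Type*} [Fintype X] [DecidableEq X]
    (w : X → ℝ) (hw : Function.Injective w) (k : ℕ) (hk : 1 ≤ k)
    (μ : Measure (X → ℝ))
    (hμ : μ = Measure.pi fun _ : X => volume.restrict (Set.Icc (0 : ℝ) 1))
    (S : (X → ℝ) → Finset X)
    (hS : ∀ ω, S ω = Finset.univ.filter fun x =>
      (Finset.univ.filter fun y => w x ≤ w y ∧ ω y < ω x).card < k) :
    (∫ ω, ((S ω).card : ℝ) ∂μ) =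
      ∑ i ∈ Finset.Icc 1 (Fintype.card X), min 1 ((k : ℝ) / (i : ℝ)) ∧
    (3 ≤ k → k ≤ Fintype.card X →
      (∫ ω, ((S ω).card : ℝ) ∂μ) ≤ (k : ℝ) * Real.log (Fintype.card X)) :=
  stmt11_general w hw k μ hμ S hS
end

section
/- Consider n keys with pairwise distinct weights, indexed i = 1, …, n in decreasing weight order, and a sampling scheme that includes key i in the sample with probability p_i. Suppose that for every i there is a nonnegative random variable Ŷ_i (an estimator of sum(thresh_{w_i}; {i}) = 1) with E[Ŷ_i] = 1, with Ŷ_i = 0 whenever key i is not sampled, and with Var[Ŷ_i] ≤ i/k (i.e., CV at most 1/sqrt(q·k) where q = q^{(thresh_{w_i})}({i}) = 1/i). Then p_i ≥ k/(k+i) for every i, and hence the expected sample size satisfies Σ_{i=1}^{n} p_i ≥ k·Σ_{i=1}^{n} 1/(k+i) ≥ k·(H_n − H_k) for n ≥ k, where H_m = Σ_{j=1}^{m} 1/j; in particular the expected sample size is Ω(k·ln(n/k)). -/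
open Finset MeasureTheory ProbabilityTheory

/-!
An unbiased estimator `Y` of `1` that vanishes off the event `A` satisfies, by Cauchy–Schwarz
against `1_A`, `1 = (E Y)² ≤ P(A) · E[Y²] = P(A) · (1 + Var Y)`. With `Var Y_i ≤ i/k` this gives
`p_i ≥ (1 + i/k)⁻¹ = k/(k+i)`; summing over `i` and comparing `∑ 1/(k+i)` with the tail
`∑_{k<j≤n} 1/j = H_n - H_k` gives the sample-size bound.
-/

section SecondMoment

variable {Ω : Type*} [MeasurableSpace Ω] {μ : Measure Ω} {Y : Ω → ℝ} {A : Set Ω}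

lemma integral_sub_mul_indicator_sq (hA : MeasurableSet A) [IsFiniteMeasure μ]
    (hY : MemLp Y 2 μ) (hzero : ∀ ω ∉ A, Y ω = 0) (t : ℝ) :
    ∫ ω, (Y ω - t * A.indicator 1 ω) ^ 2 ∂μ =
      μ.real A * (t * t) + (-2 * ∫ ω, Y ω ∂μ) * t + ∫ ω, Y ω ^ 2 ∂μ := by
  have hpointwise : ∀ ω, (Y ω - t * A.indicator 1 ω) ^ 2 =
      (Y ω ^ 2 - 2 * t * Y ω) + t ^ 2 * A.indicator 1 ω := by
    intro ω
    by_cases hω : ω ∈ A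
    · simp only [Set.indicator_of_mem hω, Pi.one_apply]; ring
    · simp only [Set.indicator_of_notMem hω, hzero ω hω]; ring
  have hY2 : Integrable (fun ω => Y ω ^ 2) μ := hY.integrable_sq
  have hY1 : Integrable (fun ω => 2 * t * Y ω) μ := (hY.integrable one_le_two).const_mul _
  have hind : Integrable (fun ω => t ^ 2 * A.indicator (1 : Ω → ℝ) ω) μ :=
    ((integrable_const 1).indicator hA).const_mul _
  have hdiff : Integrable (fun ω => Y ω ^ 2 - 2 * t * Y ω) μ := hY2.sub hY1
  simp_rw [hpointwise]
  rw [integral_add hdiff hind, integral_sub hY2 hY1, integral_const_mul,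
    integral_const_mul, integral_indicator_one hA]
  ring

/-- Cauchy–Schwarz against `1_A`: the quadratic `t ↦ ∫ (Y - t·1_A)²` is nonnegative, so its
discriminant is not positive. -/
lemma sq_integral_le_measureReal_mul_integral_sq (hA : MeasurableSet A) [IsFiniteMeasure μ]
    (hY : MemLp Y 2 μ) (hzero : ∀ ω ∉ A, Y ω = 0) :
    (∫ ω, Y ω ∂μ) ^ 2 ≤ μ.real A * ∫ ω, Y ω ^ 2 ∂μ := by
  have h := discrim_le_zero fun t => (integral_sub_mul_indicator_sq hA hY hzero t).symm ▸
    integral_nonneg fun ω => sq_nonneg (Y ω - t * A.indicator 1 ω)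
  rw [discrim] at h
  linarith

lemma inv_one_add_variance_le_measureReal (hA : MeasurableSet A) [IsProbabilityMeasure μ]
    (hY : MemLp Y 2 μ) (hzero : ∀ ω ∉ A, Y ω = 0) (hmean : ∫ ω, Y ω ∂μ = 1) :
    (1 + variance Y μ)⁻¹ ≤ μ.real A := by
  have hsecond : ∫ ω, Y ω ^ 2 ∂μ = 1 + variance Y μ := by
    rw [variance_eq_sub hY]
    simp [hmean]
  have hCS := sq_integral_le_measureReal_mul_integral_sq hA hY hzero
  rw [hmean, hsecond, one_pow] at hCS
  rwa [inv_le_iff_one_le_mul₀' (by linarith [variance_nonneg Y μ]), mul_comm]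

end SecondMoment

lemma sum_Icc_sub_sum_Icc_eq_sum_Icc_add {M : Type*} [AddCommGroup M] (f : ℕ → M) {k n : ℕ}
    (hkn : k ≤ n) :
    ∑ j ∈ Icc 1 n, f j - ∑ j ∈ Icc 1 k, f j = ∑ i ∈ Icc 1 (n - k), f (k + i) := by
  have hshift : ∑ i ∈ Icc 1 (n - k), f (k + i) = ∑ j ∈ Ioc k n, f j := by
    refine (sum_map _ (addLeftEmbedding k) f).symm.trans ?_
    rw [map_add_left_Icc, Nat.add_sub_cancel' hkn, Icc_add_one_left_eq_Ioc]
  have hIcc_one : ∀ m : ℕ, Icc 1 m = Ioc 0 m := Icc_add_one_left_eq_Ioc 0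
  rw [hshift, hIcc_one, hIcc_one, sub_eq_iff_eq_add', sum_Ioc_consecutive f (Nat.zero_le k) hkn]

theorem stmt14_general {Ω : Type*} [MeasurableSpace Ω] (μ : Measure Ω)
    [IsProbabilityMeasure μ]
    (n k : ℕ) (hk : 1 ≤ k)
    (p : ℕ → ℝ) (hp0 : ∀ i ∈ Finset.Icc 1 n, 0 < p i)
    (A : ℕ → Set Ω) (hA : ∀ i ∈ Finset.Icc 1 n, MeasurableSet (A i))
    (hpA : ∀ i ∈ Finset.Icc 1 n, μ (A i) = ENNReal.ofReal (p i))
    (Y : ℕ → Ω → ℝ) (hYint : ∀ i ∈ Finset.Icc 1 n, MemLp (Y i) 2 μ)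
    (hmean : ∀ i ∈ Finset.Icc 1 n, ∫ ω, Y i ω ∂μ = 1)
    (hzero : ∀ i ∈ Finset.Icc 1 n, ∀ ω ∉ A i, Y i ω = 0)
    (hvar : ∀ i ∈ Finset.Icc 1 n, variance (Y i) μ ≤ (i : ℝ) / (k : ℝ)) :
    (∀ i ∈ Finset.Icc 1 n, (k : ℝ) / ((k : ℝ) + (i : ℝ)) ≤ p i) ∧
    (k : ℝ) * ∑ i ∈ Finset.Icc 1 n, 1 / ((k : ℝ) + (i : ℝ)) ≤
      ∑ i ∈ Finset.Icc 1 n, p i ∧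
    (k ≤ n →
      (k : ℝ) * ((∑ j ∈ Finset.Icc 1 n, 1 / (j : ℝ)) -
          ∑ j ∈ Finset.Icc 1 k, 1 / (j : ℝ)) ≤
        (k : ℝ) * ∑ i ∈ Finset.Icc 1 n, 1 / ((k : ℝ) + (i : ℝ))) := by
  have hkey : ∀ i ∈ Icc 1 n, (k : ℝ) / (k + i) ≤ p i := by
    intro i hi
    have hvar_pos : 0 < 1 + variance (Y i) μ := by linarith [variance_nonneg (Y i) μ]
    calc (k : ℝ) / (k + i) = (1 + (i : ℝ) / k)⁻¹ := by field_simp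
      _ ≤ (1 + variance (Y i) μ)⁻¹ := inv_anti₀ hvar_pos (by linarith [hvar i hi])
      _ ≤ μ.real (A i) :=
        inv_one_add_variance_le_measureReal (hA i hi) (hYint i hi) (hzero i hi) (hmean i hi)
      _ = p i := by rw [measureReal_def, hpA i hi, ENNReal.toReal_ofReal (hp0 i hi).le]
  refine ⟨hkey, ?_, fun hkn => ?_⟩
  · rw [mul_sum]
    exact sum_le_sum fun i hi => (mul_one_div _ _).trans_le (hkey i hi)
  · rw [sum_Icc_sub_sum_Icc_eq_sum_Icc_add (fun j : ℕ => 1 / (j : ℝ)) hkn]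
    push_cast
    gcongr
    exact Nat.sub_le n k

/-- Lower bound on the sample size of any scheme meeting the
per-segment quality guarantee for all threshold functions: if for each key `i`
(keys indexed `1,…,n` in decreasing weight order) there is a nonnegative unbiased
estimator `Y_i` of `sum(thresh_{w_i};{i}) = 1` that vanishes when `i` is not
sampled and has variance at most `i/k`, then `p_i ≥ k/(k+i)` for every `i`, so the
expected sample size is at least `k·Σ_{i=1}^n 1/(k+i) ≥ k·(H_n − H_k)` (for
`n ≥ k`), which is `Ω(k·ln(n/k))`. -/
theorem stmt14 {Ω : Type*} [MeasurableSpace Ω] (μ : Measure Ω)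
    [IsProbabilityMeasure μ]
    (n k : ℕ) (hk : 1 ≤ k)
    (w : ℕ → ℝ) (hw : ∀ i j, 1 ≤ i → i < j → j ≤ n → w j < w i)
    (p : ℕ → ℝ) (hp0 : ∀ i ∈ Finset.Icc 1 n, 0 < p i)
    (A : ℕ → Set Ω) (hA : ∀ i ∈ Finset.Icc 1 n, MeasurableSet (A i))
    (hpA : ∀ i ∈ Finset.Icc 1 n, μ (A i) = ENNReal.ofReal (p i))
    (Y : ℕ → Ω → ℝ) (hYint : ∀ i ∈ Finset.Icc 1 n, MemLp (Y i) 2 μ)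
    (hpos : ∀ i ∈ Finset.Icc 1 n, ∀ ω, 0 ≤ Y i ω)
    (hmean : ∀ i ∈ Finset.Icc 1 n, ∫ ω, Y i ω ∂μ = 1)
    (hzero : ∀ i ∈ Finset.Icc 1 n, ∀ ω ∉ A i, Y i ω = 0)
    (hvar : ∀ i ∈ Finset.Icc 1 n, variance (Y i) μ ≤ (i : ℝ) / (k : ℝ)) :
    (∀ i ∈ Finset.Icc 1 n, (k : ℝ) / ((k : ℝ) + (i : ℝ)) ≤ p i) ∧
    (k : ℝ) * ∑ i ∈ Finset.Icc 1 n, 1 / ((k : ℝ) + (i : ℝ)) ≤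
      ∑ i ∈ Finset.Icc 1 n, p i ∧
    (k ≤ n →
      (k : ℝ) * ((∑ j ∈ Finset.Icc 1 n, 1 / (j : ℝ)) -
          ∑ j ∈ Finset.Icc 1 k, 1 / (j : ℝ)) ≤
        (k : ℝ) * ∑ i ∈ Finset.Icc 1 n, 1 / ((k : ℝ) + (i : ℝ))) :=
  stmt14_general μ n k hk p hp0 A hA hpA Y hYint hmean hzero hvar
end

section
/- Let X be a finite set of keys with weights w : X → ℝ>0 and ranks r : X → ℝ>0, and assume there are no seed ties: for all distinct keys y, z and all T > 0, r_y/min(T, w_y) ≠ r_z/min(T, w_z). Fix an integer k ≥ 1. Then for every key x: there exists T > 0 with |{y ≠ x : r_y/min(T, w_y) < r_x/min(T, w_x)}| < k if and only if |{y ≠ x : r_y/min(w_x, w_y) < r_x/w_x}| < k. That is, x belongs to the union over all T > 0 of the bottom-k samples for the capping functions Capp_T if and only if x belongs to the bottom-k sample for Capp_{w_x}. -/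
/-!
Every key that beats `x` under the cap `w x` beats it under every cap `T > 0`: raising the cap
above `w x` leaves the seed of `x` unchanged and can only lower the other seeds, while lowering it
below `w x` multiplies the seed of `x` by `w x / T`, at least as much as any other seed grows.
So `T = w x` minimises the number of keys ahead of `x`.
-/

open Finset

theorem div_min_lt_div_min_of_div_min_lt {rx ry wx wy T : ℝ} (hwx : 0 < wx) (hwy : 0 < wy)
    (hry : 0 ≤ ry) (hT : 0 < T) (h : ry / min wx wy < rx / wx) :
    ry / min T wy < rx / min T wx := by
  rcases le_total wx T with hxT | hTx
  · rw [min_eq_right hxT]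
    calc ry / min T wy ≤ ry / min wx wy := by gcongr
      _ < rx / wx := h
  · rw [min_eq_left hTx]
    rcases le_total T wy with hTy | hyT
    · have hry_lt : ry < rx := by
        have : ry / wx ≤ ry / min wx wy := by gcongr; exact min_le_left _ _
        exact (div_lt_div_iff_of_pos_right hwx).mp (this.trans_lt h)
      rw [min_eq_left hTy]
      exact div_lt_div_of_pos_right hry_lt hT
    · rw [min_eq_right hyT]
      rw [min_eq_right (hyT.trans hTx)] at h
      calc ry / wy < rx / wx := h
        _ ≤ rx / T := by
          have hrx : 0 < rx := (div_pos_iff_of_pos_right hwx).mp ((div_nonneg hry hwy.le).trans_lt h)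
          gcongr

theorem card_filter_lt_own_weight_le {X : Type*} [Fintype X] [DecidableEq X] (w r : X → ℝ)
    (hw : ∀ x, 0 < w x) (hr : ∀ x, 0 ≤ r x) (x : X) {T : ℝ} (hT : 0 < T) :
    (univ.filter fun y => y ≠ x ∧ r y / min (w x) (w y) < r x / w x).card ≤
      (univ.filter fun y => y ≠ x ∧ r y / min T (w y) < r x / min T (w x)).card :=
  card_le_card <| monotone_filter_right _ fun y _ ⟨hyx, hlt⟩ =>
    ⟨hyx, div_min_lt_div_min_of_div_min_lt (hw x) (hw y) (hr y) hT hlt⟩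

theorem stmt16_general {X : Type*} [Fintype X] [DecidableEq X]
    (w r : X → ℝ) (hw : ∀ x, 0 < w x) (hr : ∀ x, 0 < r x)
    (k : ℕ) :
    ∀ x : X,
      (∃ T : ℝ, 0 < T ∧ (Finset.univ.filter fun y =>
          y ≠ x ∧ r y / min T (w y) < r x / min T (w x)).card < k) ↔
      (Finset.univ.filter fun y =>
          y ≠ x ∧ r y / min (w x) (w y) < r x / w x).card < k := by
  intro x
  constructor
  · rintro ⟨T, hT, hcard⟩
    exact (card_filter_lt_own_weight_le w r hw (fun y => (hr y).le) x hT).trans_lt hcard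
  · intro hcard
    exact ⟨w x, hw x, by simpa only [min_self] using hcard⟩

/-- With no seed ties, a key `x` belongs to the union over
`T > 0` of the bottom-`k` samples for the capping functions `Capp_T` if and only
if it belongs to the bottom-`k` sample for `Capp_{w_x}`. -/
theorem stmt16 {X : Type*} [Fintype X] [DecidableEq X]
    (w r : X → ℝ) (hw : ∀ x, 0 < w x) (hr : ∀ x, 0 < r x)
    (hties : ∀ y z : X, y ≠ z → ∀ T : ℝ, 0 < T →
      r y / min T (w y) ≠ r z / min T (w z))
    (k : ℕ) (hk : 1 ≤ k) :
    ∀ x : X,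
      (∃ T : ℝ, 0 < T ∧ (Finset.univ.filter fun y =>
          y ≠ x ∧ r y / min T (w y) < r x / min T (w x)).card < k) ↔
      (Finset.univ.filter fun y =>
          y ≠ x ∧ r y / min (w x) (w y) < r x / w x).card < k :=
  stmt16_general w r hw hr k
end
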